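/- If a single rotation transforms tree S into tree T, then all internal edges of S except exactly one are common with T; equivalently, the number of common edge pairs between S and T is at least n - 2, where n is the number of internal nodes. -/

import Mathlib

inductive BT : Type
  | leaf : BT
  | node : BT → BT → BT
deriving DecidableEq

namespace BT

/-- number of internal nodes -/
def size : BT → ℕ
  | leaf => 0
  | node l r => size l + size r + 1

/-- number of leaves -/
def nl (t : BT) : ℕ := size t + 1

/-- one (right) rotation somewhere in the tree -/
inductive Rot : BT → BT → Prop
  | root (a b c : BT) : Rot (node (node a b) c) (node a (node b c))
  | congrL {l l' : BT} (r : BT) : Rot l l' → Rot (node l r) (node l' r)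
  | congrR (l : BT) {r r' : BT} : Rot r r' → Rot (node l r) (node l r')

/-- a rotation move: a right rotation or its inverse (a left rotation) -/
def Move (s t : BT) : Prop := Rot s t ∨ Rot t s

/-- `Chain n s t`: `s` is transformed into `t` by `n` rotation moves -/
inductive Chain : ℕ → BT → BT → Prop
  | refl (t : BT) : Chain 0 t t
  | step {n : ℕ} {s u t : BT} : Move s u → Chain n u t → Chain (n + 1) s t

/-- rotation distance -/
noncomputable def dR (s t : BT) : ℕ := sInf {n | Chain n s t}

def isNode : BT → Bool
  | leaf => false
  | node _ _ => true

/-- the multiset of leaf partitions induced by internal edges, where the leaves of the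
tree are numbered from `k` on, left to right; each internal edge is recorded by the
set of leaf numbers below it. -/
def iparts : BT → ℕ → Multiset (Finset ℕ)
  | leaf, _ => 0
  | node l r, k =>
      ((if isNode l then {Finset.Ico k (k + nl l)} else 0) + iparts l k)
        + ((if isNode r then {Finset.Ico (k + nl l) (k + nl l + nl r)} else 0)
            + iparts r (k + nl l))

/-- number of common edge pairs -/
def commonEdges (s t : BT) : ℕ := ((iparts s 0) ∩ (iparts t 0)).card

/-!
A rotation of `node (node a b) c` into `node a (node b c)` only trades the edge above `node a b`
for the edge above `node b c`. Every other internal edge keeps its leaf set: a rotation preserves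
the number of leaves of the rotated subtree, so the leaf numbering outside it, and inside `a`, `b`,
`c`, is unchanged. Hence the edge multisets of `S` and `T` are `X ::ₘ M` and `Y ::ₘ M`, and `M`
has `n - 2` elements since a tree with `n` internal nodes has `n - 1` internal edges.
-/

theorem nl_node (l r : BT) : nl (node l r) = nl l + nl r := by
  simp only [nl, size]; omega

theorem Rot.size_eq {s t : BT} (h : Rot s t) : size s = size t := by
  induction h with
  | root => simp only [size]; omega
  | congrL _ _ ih | congrR _ _ ih => simp only [size, ih]

theorem Rot.nl_eq {s t : BT} (h : Rot s t) : nl s = nl t := by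
  rw [nl, nl, h.size_eq]

theorem Rot.isNode_left {s t : BT} (h : Rot s t) : isNode s = true := by
  cases h <;> rfl

theorem Rot.isNode_right {s t : BT} (h : Rot s t) : isNode t = true := by
  cases h <;> rfl

theorem card_iparts (t : BT) (k : ℕ) : (iparts t k).card = size t - 1 := by
  induction t generalizing k with
  | leaf => rfl
  | node l r ihl ihr =>
    have hite : ∀ (u : BT) (X : Finset ℕ),
        (if isNode u then ({X} : Multiset (Finset ℕ)) else 0).card + (size u - 1) = size u := by
      intro u X
      cases u
      · rfl
      · simp only [isNode, if_true, Multiset.card_singleton, size]; omega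
    simp only [iparts, Multiset.card_add, ihl, ihr, size]
    have := hite l (Finset.Ico k (k + nl l))
    have := hite r (Finset.Ico (k + nl l) (k + nl l + nl r))
    omega

theorem Rot.exists_iparts_eq_cons {s t : BT} (h : Rot s t) (k : ℕ) :
    ∃ X Y M, iparts s k = X ::ₘ M ∧ iparts t k = Y ::ₘ M := by
  induction h generalizing k with
  | root a b c =>
    refine ⟨Finset.Ico k (k + nl a + nl b), Finset.Ico (k + nl a) (k + nl a + nl b + nl c),
      ((if isNode a then {Finset.Ico k (k + nl a)} else 0) + iparts a k)
        + ((if isNode b then {Finset.Ico (k + nl a) (k + nl a + nl b)} else 0)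
          + iparts b (k + nl a))
        + ((if isNode c then {Finset.Ico (k + nl a + nl b) (k + nl a + nl b + nl c)} else 0)
          + iparts c (k + nl a + nl b)), ?_, ?_⟩
    all_goals
      simp only [iparts, isNode, nl_node, ← add_assoc, if_true, ← Multiset.singleton_add]
      ac_rfl
  | @congrL l l' r hl ih =>
    obtain ⟨X, Y, M, hs, ht⟩ := ih k
    refine ⟨X, Y, Finset.Ico k (k + nl l) ::ₘ M
        + ((if isNode r then {Finset.Ico (k + nl l) (k + nl l + nl r)} else 0)
          + iparts r (k + nl l)), ?_, ?_⟩
    all_goals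
      simp only [iparts, hl.isNode_left, hl.isNode_right, ← hl.nl_eq, if_true, hs, ht,
        ← Multiset.singleton_add]
      ac_rfl
  | @congrR l r r' hr ih =>
    obtain ⟨X, Y, M, hs, ht⟩ := ih (k + nl l)
    refine ⟨X, Y, ((if isNode l then {Finset.Ico k (k + nl l)} else 0) + iparts l k)
        + Finset.Ico (k + nl l) (k + nl l + nl r) ::ₘ M, ?_, ?_⟩
    all_goals
      simp only [iparts, hr.isNode_left, hr.isNode_right, ← hr.nl_eq, if_true, hs, ht,
        ← Multiset.singleton_add]
      ac_rfl

theorem Move.exists_iparts_eq_cons {s t : BT} (h : Move s t) (k : ℕ) :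
    ∃ X Y M, iparts s k = X ::ₘ M ∧ iparts t k = Y ::ₘ M := by
  rcases h with h | h
  · exact h.exists_iparts_eq_cons k
  · obtain ⟨X, Y, M, ht, hs⟩ := h.exists_iparts_eq_cons k
    exact ⟨Y, X, M, hs, ht⟩

theorem common_edges_after_one_rotation (n : ℕ) (S T : BT)
    (hS : S.size = n) (h : Move S T) : n - 2 ≤ commonEdges S T := by
  obtain ⟨X, Y, M, hs, ht⟩ := h.exists_iparts_eq_cons 0
  have hM : M ≤ iparts S 0 ∩ iparts T 0 :=
    Multiset.le_inter (hs ▸ Multiset.le_cons_self M X) (ht ▸ Multiset.le_cons_self M Y)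
  have hcard : M.card = n - 2 := by
    have := card_iparts S 0
    rw [hs, Multiset.card_cons, hS] at this
    omega
  exact hcard ▸ Multiset.card_le_card hM

end BT
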